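/- Let X be an n×n real symmetric positive definite matrix and H an n×n real symmetric matrix. Then the function φ(t) = Tr((X + tH) · log(X + tH)), defined for t in a neighborhood of 0 where X + tH is positive definite, is differentiable at t = 0 with φ'(0) = Tr(H · (log X + I)). -/

import Mathlib

/-!
Write `A = X + t • H`. By linearity of the trace, the remainder
`Tr(A log A) - Tr(X log X) - t Tr(H (log X + 1))` is exactly the von Neumann divergence
`D(A‖X)`. Expanding `A` and `X` in orthonormal eigenbases `(uᵢ)`, `(vⱼ)` with eigenvalues `aᵢ`,
`bⱼ`, both `D(A‖X)` and `Tr((A - X)²)` become averages against the weights `⟪uᵢ, vⱼ⟫²`: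
of `aᵢ log aᵢ - aᵢ log bⱼ - aᵢ + bⱼ` and of `(aᵢ - bⱼ)²` respectively. The scalar bound
`|a log a - a log b - a + b| ≤ 2 (a - b)² / b` holds for `b > 0` and every real `a` (with
`Real.log a = log |a|`), so no control on the spectrum of `X + t • H` is needed, and
`|D(A‖X)| = O(t²)`.
-/

open Matrix

/-- Matrix logarithm of a real symmetric matrix, via the spectral decomposition:
apply the real logarithm to the eigenvalues. (Junk value `0` if not symmetric.) -/
noncomputable def matLog {n : Type*} [Fintype n] [DecidableEq n]
    (A : Matrix n n ℝ) : Matrix n n ℝ :=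
  if h : A.IsHermitian then h.cfc Real.log else 0

/-- The von Neumann divergence `D_vN(X‖Y) = Tr(X log X − X log Y − X + Y)`. -/
noncomputable def DvN {n : Type*} [Fintype n] [DecidableEq n]
    (X Y : Matrix n n ℝ) : ℝ :=
  (X * matLog X - X * matLog Y - X + Y).trace

/-- The symmetric (Jeffery) von Neumann divergence
`J_vN(X:Y) = (1/2)(D_vN(X‖Y) + D_vN(Y‖X))`. -/
noncomputable def JvN {n : Type*} [Fintype n] [DecidableEq n]
    (X Y : Matrix n n ℝ) : ℝ :=
  (1 / 2) * (DvN X Y + DvN Y X)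

open Finset

theorem Real.mul_log_sub_log_le {x y : ℝ} (hx : 0 < x) (hy : 0 < y) :
    x * (Real.log y - Real.log x) ≤ y - x := by
  have h := Real.log_le_sub_one_of_pos (div_pos hy hx)
  rw [Real.log_div hy.ne' hx.ne'] at h
  calc x * (Real.log y - Real.log x) ≤ x * (y / x - 1) := mul_le_mul_of_nonneg_left h hx.le
    _ = y - x := by field_simp

theorem Real.abs_mul_log_sub_mul_log_sub_add_le (a : ℝ) {b : ℝ} (hb : 0 < b) :
    |a * Real.log a - a * Real.log b - a + b| ≤ 2 * (a - b) ^ 2 / b := by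
  set g := a * Real.log a - a * Real.log b - a + b with hg
  suffices h : -(2 * (a - b) ^ 2) ≤ g * b ∧ g * b ≤ 2 * (a - b) ^ 2 by
    calc |g| = |g * b| / b := by rw [abs_mul, abs_of_pos hb, mul_div_cancel_right₀ _ hb.ne']
      _ ≤ 2 * (a - b) ^ 2 / b := by gcongr; exact abs_le.2 h
  rw [hg]
  rcases lt_trichotomy a 0 with ha | rfl | ha
  · have hs : 0 < -a := neg_pos.2 ha
    have hupper := Real.mul_log_sub_log_le hs hb
    have hlower := mul_le_mul_of_nonneg_left (Real.mul_log_sub_log_le hb hs) hs.le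
    rw [← Real.log_neg_eq_log a]
    constructor <;> nlinarith
  · constructor <;> nlinarith
  · have hlower := Real.mul_log_sub_log_le ha hb
    have hupper := mul_le_mul_of_nonneg_left (Real.mul_log_sub_log_le hb ha) ha.le
    constructor <;> nlinarith

section

variable {n : Type*} [Fintype n] [DecidableEq n] {A B : Matrix n n ℝ}

theorem Matrix.trace_diagonal_mul_mul_diagonal_mul_transpose (d e : n → ℝ) (M : Matrix n n ℝ) :
    (diagonal d * M * diagonal e * Mᵀ).trace = ∑ i, ∑ j, M i j ^ 2 * (d i * e j) := by
  simp only [trace, diag_apply, mul_apply, diagonal_apply, transpose_apply, ite_mul, zero_mul,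
    mul_ite, mul_zero, sum_ite_eq, sum_ite_eq', mem_univ, if_true]
  exact sum_congr rfl fun i _ => sum_congr rfl fun j _ => by ring

namespace Matrix.IsHermitian

noncomputable def eigenvectorOverlap (hA : A.IsHermitian) (hB : B.IsHermitian) (i j : n) : ℝ :=
  ((star (hA.eigenvectorUnitary : Matrix n n ℝ) * hB.eigenvectorUnitary) i j) ^ 2

theorem eigenvectorOverlap_nonneg (hA : A.IsHermitian) (hB : B.IsHermitian) (i j : n) :
    0 ≤ hA.eigenvectorOverlap hB i j :=
  sq_nonneg _

theorem trace_cfc_mul_cfc (hA : A.IsHermitian) (hB : B.IsHermitian) (f g : ℝ → ℝ) :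
    (cfc f A * cfc g B).trace =
      ∑ i, ∑ j, hA.eigenvectorOverlap hB i j * (f (hA.eigenvalues i) * g (hB.eigenvalues j)) := by
  set U : Matrix n n ℝ := (hA.eigenvectorUnitary : Matrix n n ℝ)
  set V : Matrix n n ℝ := (hB.eigenvectorUnitary : Matrix n n ℝ)
  have hM : star V * U = (star U * V)ᵀ := by simp [star_eq_conjTranspose, Matrix.transpose_mul]
  have hcyc : (cfc f A * cfc g B).trace =
      (diagonal (f ∘ hA.eigenvalues) * (star U * V) * diagonal (g ∘ hB.eigenvalues) *
        (star V * U)).trace := by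
    rw [hA.cfc_eq, hB.cfc_eq, IsHermitian.cfc, IsHermitian.cfc, Unitary.conjStarAlgAut_apply,
      Unitary.conjStarAlgAut_apply]
    simp only [RCLike.ofReal_real_eq_id, Function.id_comp, Matrix.mul_assoc]
    rw [← trace_mul_comm]
    simp only [Matrix.mul_assoc]
    rfl
  rw [hcyc, hM, trace_diagonal_mul_mul_diagonal_mul_transpose]
  rfl

theorem trace_cfc_eq_sum_left (hA : A.IsHermitian) (hB : B.IsHermitian) (f : ℝ → ℝ) :
    (cfc f A).trace = ∑ i, ∑ j, hA.eigenvectorOverlap hB i j * f (hA.eigenvalues i) := by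
  simpa [cfc_const_one ℝ B] using hA.trace_cfc_mul_cfc hB f fun _ => 1

theorem trace_cfc_eq_sum_right (hA : A.IsHermitian) (hB : B.IsHermitian) (g : ℝ → ℝ) :
    (cfc g B).trace = ∑ i, ∑ j, hA.eigenvectorOverlap hB i j * g (hB.eigenvalues j) := by
  simpa [cfc_const_one ℝ A] using hA.trace_cfc_mul_cfc hB (fun _ => 1) g

end Matrix.IsHermitian

theorem matLog_eq_cfc (hA : A.IsHermitian) : matLog A = cfc Real.log A :=
  (dif_pos hA).trans (hA.cfc_eq _).symm

theorem DvN_eq_sum_eigenvectorOverlap (hA : A.IsHermitian) (hB : B.IsHermitian) :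
    DvN A B = ∑ i, ∑ j, hA.eigenvectorOverlap hB i j *
      (hA.eigenvalues i * Real.log (hA.eigenvalues i) -
        hA.eigenvalues i * Real.log (hB.eigenvalues j) - hA.eigenvalues i + hB.eigenvalues j) := by
  have hAA : A * matLog A = cfc (fun x => x * Real.log x) A := by
    rw [matLog_eq_cfc hA]
    nth_rewrite 1 [← cfc_id' ℝ A]
    exact (cfc_mul _ _ A continuousOn_id (A.finite_real_spectrum.continuousOn _)).symm
  have hAB : A * matLog B = cfc (fun x : ℝ => x) A * cfc Real.log B := by
    rw [matLog_eq_cfc hB, cfc_id' ℝ A]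
  have htrA : A.trace = (cfc (fun x : ℝ => x) A).trace := by rw [cfc_id' ℝ A]
  have htrB : B.trace = (cfc (fun x : ℝ => x) B).trace := by rw [cfc_id' ℝ B]
  rw [DvN, trace_add, trace_sub, trace_sub, hAA, hAB, htrA, htrB,
    hA.trace_cfc_eq_sum_left hB, hA.trace_cfc_mul_cfc hB, hA.trace_cfc_eq_sum_left hB,
    hA.trace_cfc_eq_sum_right hB]
  simp only [← sum_sub_distrib, ← sum_add_distrib]
  exact sum_congr rfl fun i _ => sum_congr rfl fun j _ => by ring

theorem trace_sub_mul_sub_eq_sum_eigenvectorOverlap (hA : A.IsHermitian) (hB : B.IsHermitian) :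
    ((A - B) * (A - B)).trace =
      ∑ i, ∑ j, hA.eigenvectorOverlap hB i j * (hA.eigenvalues i - hB.eigenvalues j) ^ 2 := by
  have hsq : ∀ C : Matrix n n ℝ, C.IsHermitian → C * C = cfc (fun x : ℝ => x * x) C :=
    fun C hC => by rw [cfc_mul (fun x : ℝ => x) (fun x => x) C, cfc_id' ℝ C]
  have hAB : A * B = cfc (fun x : ℝ => x) A * cfc (fun x : ℝ => x) B := by
    rw [cfc_id' ℝ A, cfc_id' ℝ B]
  rw [sub_mul, mul_sub, mul_sub, trace_sub, trace_sub, trace_sub, trace_mul_comm B A, hsq A hA,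
    hsq B hB, hAB, hA.trace_cfc_eq_sum_left hB, hA.trace_cfc_mul_cfc hB,
    hA.trace_cfc_eq_sum_right hB]
  simp only [← sum_sub_distrib]
  exact sum_congr rfl fun i _ => sum_congr rfl fun j _ => by ring

theorem abs_DvN_le (hA : A.IsHermitian) (hB : B.PosDef) {c : ℝ}
    (hc : ∀ j, (hB.1.eigenvalues j)⁻¹ ≤ c) :
    |DvN A B| ≤ 2 * c * ((A - B) * (A - B)).trace := by
  rw [DvN_eq_sum_eigenvectorOverlap hA hB.1,
    trace_sub_mul_sub_eq_sum_eigenvectorOverlap hA hB.1, mul_sum]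
  refine (abs_sum_le_sum_abs _ _).trans (sum_le_sum fun i _ => ?_)
  rw [mul_sum]
  refine (abs_sum_le_sum_abs _ _).trans (sum_le_sum fun j _ => ?_)
  have hw := hA.eigenvectorOverlap_nonneg hB.1 i j
  set w := hA.eigenvectorOverlap hB.1 i j
  set a := hA.eigenvalues i
  set b := hB.1.eigenvalues j
  calc |w * (a * Real.log a - a * Real.log b - a + b)|
      ≤ w * (2 * (a - b) ^ 2 / b) := by
        rw [abs_mul, abs_of_nonneg hw]
        gcongr
        exact Real.abs_mul_log_sub_mul_log_sub_add_le a (hB.eigenvalues_pos j)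
    _ ≤ w * (2 * (a - b) ^ 2 * c) := by
        rw [div_eq_mul_inv]
        gcongr
        exact hc j
    _ = 2 * c * (w * (a - b) ^ 2) := by ring

theorem DvN_add_smul_self (X H : Matrix n n ℝ) (t : ℝ) :
    DvN (X + t • H) X = ((X + t • H) * matLog (X + t • H)).trace - (X * matLog X).trace -
      t * (H * (matLog X + 1)).trace := by
  simp only [DvN, add_mul, mul_add, mul_one, smul_mul_assoc, trace_add, trace_sub, trace_smul,
    smul_eq_mul]
  ring

theorem hasDerivAt_of_abs_sub_sub_le_sq {f : ℝ → ℝ} {f' x C : ℝ}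
    (h : ∀ t, |f t - f x - (t - x) * f'| ≤ C * (t - x) ^ 2) : HasDerivAt f f' x := by
  rw [hasDerivAt_iff_isLittleO]
  refine Asymptotics.IsBigO.trans_isLittleO (.of_bound C (.of_forall fun t => ?_))
    (Asymptotics.isLittleO_pow_sub_sub x one_lt_two)
  simpa using h t

end

/-- The function `t ↦ Tr((X + tH) log(X + tH))` is differentiable at `t = 0` with
derivative `Tr(H (log X + I))`, for `X` symmetric positive definite and `H` symmetric. -/
theorem hasDerivAt_trace_mul_log {n : Type*} [Fintype n] [DecidableEq n]
    (X H : Matrix n n ℝ) (hX : X.PosDef) (hH : H.IsHermitian) :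
    HasDerivAt (fun t : ℝ => ((X + t • H) * matLog (X + t • H)).trace)
      ((H * (matLog X + 1)).trace) 0 := by
  set c := ∑ k, (hX.1.eigenvalues k)⁻¹
  have hc : ∀ j, (hX.1.eigenvalues j)⁻¹ ≤ c := fun j =>
    single_le_sum (fun k _ => (inv_pos.2 (hX.eigenvalues_pos k)).le) (mem_univ j)
  refine hasDerivAt_of_abs_sub_sub_le_sq (C := 2 * c * (H * H).trace) fun t => ?_
  calc _ = |DvN (X + t • H) X| := by simp [DvN_add_smul_self]
    _ ≤ 2 * c * ((X + t • H - X) * (X + t • H - X)).trace :=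
        abs_DvN_le (hX.1.add (hH.smul (IsSelfAdjoint.all t))) hX hc
    _ = 2 * c * (H * H).trace * (t - 0) ^ 2 := by
        simp only [add_sub_cancel_left, smul_mul_smul, trace_smul, smul_eq_mul]
        ring
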